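/- Let m, k ≥ 1, n = m + k, and let α_ν : ℝⁿ × ℝᵐ × ℝ → ℝ (ν = 1,…,k) be C² functions of (q₁,…,qₙ, q̇₁,…,q̇_m, t) such that ᾱ_ν := Σ_{i=1}^m q̇_i ∂α_ν/∂q̇_i equals α_ν identically for every ν = 1,…,k. Let T be a C² kinetic energy, T* its restriction obtained by substituting q̇_{m+ν} = α_ν, U a C² potential of (q₁,…,qₙ,t), L* := T* + U, and define B_i^ν as in the Voronec-type formalism. Then along every C² admissible curve q(t) (q̇_{m+ν} = α_ν along the curve) satisfying the equations of motion d/dt(∂T*/∂q̇_i) − ∂T*/∂q_i − Σ_{ν=1}^k (∂T*/∂q_{m+ν})(∂α_ν/∂q̇_i) − Σ_{ν=1}^k B_i^ν ∂T/∂q̇_{m+ν} = ∂U/∂q_i + Σ_{ν=1}^k (∂α_ν/∂q̇_i)(∂U/∂q_{m+ν}) for i = 1,…,m, one has: d/dt( Σ_{i=1}^m q̇_i ∂L*/∂q̇_i − L* ) = − ∂L*/∂t + Σ_{ν=1}^k (∂T/∂q̇_{m+ν})(∂α_ν/∂t). -/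

import Mathlib

open scoped BigOperators

noncomputable section

/-- A phase point: positions `q ∈ ℝⁿ`, independent velocities `v ∈ ℝᵐ`, and time `t`. -/
abbrev PhasePt (n m : ℕ) : Type := (Fin n → ℝ) × (Fin m → ℝ) × ℝ

/-- Partial derivative of `f : PhasePt n m → ℝ` with respect to the coordinate `q i`. -/
def pq {n m : ℕ} (f : PhasePt n m → ℝ) (i : Fin n) (p : PhasePt n m) : ℝ :=
  fderiv ℝ f p (Pi.single i 1, 0, 0)

/-- Partial derivative with respect to the independent velocity `q̇ r`. -/
def pv {n m : ℕ} (f : PhasePt n m → ℝ) (r : Fin m) (p : PhasePt n m) : ℝ :=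
  fderiv ℝ f p (0, Pi.single r 1, 0)

/-- Partial derivative with respect to time. -/
def ptime {n m : ℕ} (f : PhasePt n m → ℝ) (p : PhasePt n m) : ℝ :=
  fderiv ℝ f p (0, 0, 1)

variable {m k : ℕ}

/-- The independent velocities `q̇ 1, …, q̇ m` along a curve. -/
def ivel (q : ℝ → Fin (m + k) → ℝ) (t : ℝ) : Fin m → ℝ :=
  fun i => deriv q t (Fin.castAdd k i)

/-- The second derivatives `q̈ r` of the independent coordinates along a curve. -/
def iacc (q : ℝ → Fin (m + k) → ℝ) (t : ℝ) : Fin m → ℝ :=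
  fun i => deriv (deriv q) t (Fin.castAdd k i)

/-- The phase-space lift `(q(t), q̇ ₁(t),…,q̇ _m(t), t)` of a curve. -/
def plift (q : ℝ → Fin (m + k) → ℝ) (t : ℝ) : PhasePt (m + k) m :=
  (q t, ivel q t, t)

/-- A curve is admissible when the constraints `q̇ (m+ν) = α ν` hold along it. -/
def Admissible (α : Fin k → PhasePt (m + k) m → ℝ) (q : ℝ → Fin (m + k) → ℝ) : Prop :=
  ∀ (t : ℝ) (ν : Fin k), deriv q t (Fin.natAdd m ν) = α ν (plift q t)

/-- `ᾱ ν := ∑ i q̇ i ∂α ν/∂q̇ i`. -/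
def abar (α : Fin k → PhasePt (m + k) m → ℝ) (ν : Fin k) (p : PhasePt (m + k) m) : ℝ :=
  ∑ i : Fin m, p.2.1 i * pv (α ν) i p

/-- The Voronec coefficient `B i ν` (formula (11) of the paper), along a curve. -/
def Bcoef (α : Fin k → PhasePt (m + k) m → ℝ) (q : ℝ → Fin (m + k) → ℝ)
    (t : ℝ) (ν : Fin k) (i : Fin m) : ℝ :=
  (∑ r : Fin m, (pq (pv (α ν) i) (Fin.castAdd k r) (plift q t) * ivel q t r
      + pv (pv (α ν) i) r (plift q t) * iacc q t r))
  - pq (α ν) (Fin.castAdd k i) (plift q t)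
  + (∑ μ : Fin k, (pq (pv (α ν) i) (Fin.natAdd m μ) (plift q t) * α μ (plift q t)
      - pv (α μ) i (plift q t) * pq (α ν) (Fin.natAdd m μ) (plift q t)))
  + ptime (pv (α ν) i) (plift q t)

/-- The coefficient `B̄ ν` (formula (15) of the paper), along a curve. -/
def Bbar (α : Fin k → PhasePt (m + k) m → ℝ) (q : ℝ → Fin (m + k) → ℝ)
    (t : ℝ) (ν : Fin k) : ℝ :=
  (∑ r : Fin m, ivel q t r *
      (pq (abar α ν) (Fin.castAdd k r) (plift q t) - pq (α ν) (Fin.castAdd k r) (plift q t)))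
  + (∑ μ : Fin k, (α μ (plift q t) * pq (abar α ν) (Fin.natAdd m μ) (plift q t)
      - abar α μ (plift q t) * pq (α ν) (Fin.natAdd m μ) (plift q t)))
  + (∑ r : Fin m, iacc q t r * (pv (abar α ν) r (plift q t) - pv (α ν) r (plift q t)))
  + ptime (abar α ν) (plift q t)

/-- The full velocity vector `(q̇ ₁,…,q̇ _m, α₁,…,α_k)` obtained from a phase point. -/
def extVel (α : Fin k → PhasePt (m + k) m → ℝ) (p : PhasePt (m + k) m) : Fin (m + k) → ℝ :=
  Fin.append p.2.1 (fun ν => α ν p)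

/-- Restriction `T*` of a kinetic energy `T` by substituting `q̇ (m+ν) = α ν`. -/
def subst (α : Fin k → PhasePt (m + k) m → ℝ) (T : PhasePt (m + k) (m + k) → ℝ)
    (p : PhasePt (m + k) m) : ℝ :=
  T (p.1, extVel α p, p.2.2)

/-- `∂T/∂q̇ (m+ν)` with the dependent velocities replaced by `α₁, …, α_k`. -/
def pvT (α : Fin k → PhasePt (m + k) m → ℝ) (T : PhasePt (m + k) (m + k) → ℝ)
    (ν : Fin k) (p : PhasePt (m + k) m) : ℝ :=
  pv T (Fin.natAdd m ν) (p.1, extVel α p, p.2.2)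

/-- Partial derivative of a potential `U(q, t)` with respect to `q j`. -/
def pqU {n : ℕ} (U : (Fin n → ℝ) × ℝ → ℝ) (j : Fin n) (p : (Fin n → ℝ) × ℝ) : ℝ :=
  fderiv ℝ U p (Pi.single j 1, 0)

/-- Partial derivative of a potential `U(q, t)` with respect to time. -/
def ptU {n : ℕ} (U : (Fin n → ℝ) × ℝ → ℝ) (p : (Fin n → ℝ) × ℝ) : ℝ :=
  fderiv ℝ U p (0, 1)

/-- The Lagrangian `L* = T* + U` in terms of the independent velocities. -/
def Lag (α : Fin k → PhasePt (m + k) m → ℝ) (T : PhasePt (m + k) (m + k) → ℝ)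
    (U : (Fin (m + k) → ℝ) × ℝ → ℝ) (p : PhasePt (m + k) m) : ℝ :=
  subst α T p + U (p.1, p.2.2)

/-- The energy `∑ i q̇ i ∂L*/∂q̇ i − L*` of a function `L*` along a curve. -/
def energy (L : PhasePt (m + k) m → ℝ) (q : ℝ → Fin (m + k) → ℝ) (t : ℝ) : ℝ :=
  (∑ i : Fin m, ivel q t i * pv L i (plift q t)) - L (plift q t)


/-!
Differentiating Euler's identity `∑ i, q̇ i ∂α ν/∂q̇ i = α ν` in `q`, `q̇` and `t` shows that the
Voronec coefficients contract with the independent velocities to `∑ i, q̇ i B i ν = ∂α ν/∂t`.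
Along any curve the accelerations cancel from the derivative of the energy, leaving
`∑ i, q̇ i d/dt(∂L*/∂q̇ i) − ∑ j, q̇ j ∂L*/∂q j − ∂L*/∂t`. Contracting the equations of motion
with `q̇ i` and using Euler's identity once more, the first sum becomes
`∑ j, q̇ j ∂L*/∂q j + ∑ ν, (∂T/∂q̇ (m+ν)) ∂α ν/∂t`, where the constraints supply the dependent
velocities `q̇ (m+ν) = α ν`.
-/

section PhaseCalculus

variable {n : ℕ}

theorem fderiv_apply_eq_sum_partials (f : PhasePt n m → ℝ) (p : PhasePt n m)
    (a : Fin n → ℝ) (b : Fin m → ℝ) (c : ℝ) :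
    fderiv ℝ f p (a, b, c) =
      ∑ j, a j * pq f j p + ∑ i, b i * pv f i p + c * ptime f p := by
  have hdecomp : ((a, b, c) : PhasePt n m) =
      ∑ j, a j • ((Pi.single j 1 : Fin n → ℝ), (0 : Fin m → ℝ), (0 : ℝ))
        + ∑ i, b i • ((0 : Fin n → ℝ), (Pi.single i 1 : Fin m → ℝ), (0 : ℝ))
        + c • ((0 : Fin n → ℝ), (0 : Fin m → ℝ), (1 : ℝ)) := by
    ext <;> simp [Prod.fst_sum, Prod.snd_sum, Pi.single_apply]
  rw [hdecomp]
  simp only [map_add, map_sum, map_smul, smul_eq_mul, pq, pv, ptime]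

theorem ContDiff.differentiable_pv {f : PhasePt n m → ℝ} (hf : ContDiff ℝ 2 f) (i : Fin m) :
    Differentiable ℝ (pv f i) :=
  ((hf.fderiv_right (m := 1) (by norm_num)).clm_apply contDiff_const).differentiable
    one_ne_zero

theorem fderiv_apply_of_euler {g : PhasePt n m → ℝ} (hg : ContDiff ℝ 2 g)
    (heuler : ∀ p, ∑ i, p.2.1 i * pv g i p = g p) (p d : PhasePt n m) :
    fderiv ℝ g p d = ∑ i, (d.2.1 i * pv g i p + p.2.1 i * fderiv ℝ (pv g i) p d) := by
  let vel : PhasePt n m →L[ℝ] Fin m → ℝ :=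
    (ContinuousLinearMap.fst ℝ _ ℝ).comp (ContinuousLinearMap.snd ℝ (Fin n → ℝ) _)
  have hsum : HasFDerivAt (fun p : PhasePt n m => ∑ i, p.2.1 i * pv g i p) _ p :=
    HasFDerivAt.fun_sum fun i _ =>
      (((ContinuousLinearMap.proj i).comp vel).hasFDerivAt.mul
        (hg.differentiable_pv i p).hasFDerivAt :)
  rw [funext heuler] at hsum
  rw [hsum.fderiv]
  simp [vel, add_comm, mul_comm]

theorem sum_mul_pq_pv_of_euler {g : PhasePt n m → ℝ} (hg : ContDiff ℝ 2 g)
    (heuler : ∀ p, ∑ i, p.2.1 i * pv g i p = g p) (j : Fin n) (p : PhasePt n m) :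
    ∑ i, p.2.1 i * pq (pv g i) j p = pq g j p := by
  simp [pq, fderiv_apply_of_euler hg heuler p]

theorem sum_mul_pv_pv_of_euler {g : PhasePt n m → ℝ} (hg : ContDiff ℝ 2 g)
    (heuler : ∀ p, ∑ i, p.2.1 i * pv g i p = g p) (r : Fin m) (p : PhasePt n m) :
    ∑ i, p.2.1 i * pv (pv g i) r p = 0 := by
  have h := fderiv_apply_of_euler hg heuler p (0, Pi.single r 1, 0)
  simpa [Finset.sum_add_distrib, Pi.single_apply, pv] using h

theorem sum_mul_ptime_pv_of_euler {g : PhasePt n m → ℝ} (hg : ContDiff ℝ 2 g)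
    (heuler : ∀ p, ∑ i, p.2.1 i * pv g i p = g p) (p : PhasePt n m) :
    ∑ i, p.2.1 i * ptime (pv g i) p = ptime g p := by
  simp [ptime, fderiv_apply_of_euler hg heuler p]

end PhaseCalculus

section Curve

variable {q : ℝ → Fin (m + k) → ℝ}

theorem hasDerivAt_plift (hq : ContDiff ℝ 2 q) (t : ℝ) :
    HasDerivAt (plift q) (deriv q t, iacc q t, 1) t := by
  have hvel : HasDerivAt (deriv q) (deriv (deriv q) t) t :=
    (hq.differentiable_deriv_two t).hasDerivAt
  have hivel : HasDerivAt (ivel q) (iacc q t) t :=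
    hasDerivAt_pi.2 fun i => hasDerivAt_pi.1 hvel (Fin.castAdd k i)
  exact (hq.differentiable two_ne_zero t).hasDerivAt.prodMk (hivel.prodMk (hasDerivAt_id t))

theorem hasDerivAt_comp_plift (hq : ContDiff ℝ 2 q) {f : PhasePt (m + k) m → ℝ} {t : ℝ}
    (hf : DifferentiableAt ℝ f (plift q t)) :
    HasDerivAt (fun s => f (plift q s))
      (∑ j, deriv q t j * pq f j (plift q t) + ∑ i, iacc q t i * pv f i (plift q t)
        + ptime f (plift q t)) t := by
  have h := hf.hasFDerivAt.comp_hasDerivAt t (hasDerivAt_plift hq t)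
  rwa [fderiv_apply_eq_sum_partials, one_mul] at h

theorem hasDerivAt_energy (hq : ContDiff ℝ 2 q) {L : PhasePt (m + k) m → ℝ}
    (hL : ContDiff ℝ 2 L) (t : ℝ) :
    HasDerivAt (energy L q)
      (∑ i, ivel q t i * deriv (fun s => pv L i (plift q s)) t
        - ∑ j, deriv q t j * pq L j (plift q t) - ptime L (plift q t)) t := by
  have hpv : ∀ i, HasDerivAt (fun s => pv L i (plift q s))
      (deriv (fun s => pv L i (plift q s)) t) t := fun i =>
    ((hL.differentiable_pv i _).comp t (hasDerivAt_plift hq t).differentiableAt).hasDerivAt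
  have hivel : ∀ i, HasDerivAt (fun s => ivel q s i) (iacc q t i) t := fun i =>
    hasDerivAt_pi.1 (hasDerivAt_plift hq t).snd.fst i
  have h := (HasDerivAt.fun_sum (u := Finset.univ) fun i _ => (hivel i).mul (hpv i)).sub
    (hasDerivAt_comp_plift hq (hL.differentiable two_ne_zero (plift q t)))
  refine h.congr_deriv ?_
  rw [Finset.sum_add_distrib]
  ring

theorem sum_deriv_mul_pq_of_admissible {α : Fin k → PhasePt (m + k) m → ℝ}
    (hadm : Admissible α q) (f : PhasePt (m + k) m → ℝ) (t : ℝ) :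
    ∑ j, deriv q t j * pq f j (plift q t) =
      ∑ i, ivel q t i * pq f (Fin.castAdd k i) (plift q t)
        + ∑ ν, α ν (plift q t) * pq f (Fin.natAdd m ν) (plift q t) := by
  simp only [Fin.sum_univ_add, hadm t]
  rfl

end Curve

theorem Finset.sum_mul_sum_mul_comm {ι κ R : Type*} [NonUnitalCommSemiring R] (s : Finset ι)
    (u : Finset κ) (v : ι → R) (X : ι → κ → R) (c : κ → R) :
    ∑ i ∈ s, v i * ∑ j ∈ u, X i j * c j = ∑ j ∈ u, (∑ i ∈ s, v i * X i j) * c j := by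
  simp only [Finset.mul_sum, Finset.sum_mul, mul_assoc]
  exact Finset.sum_comm

section Constraints

variable {α : Fin k → PhasePt (m + k) m → ℝ}

theorem sum_ivel_mul_Bcoef (hα : ∀ ν, ContDiff ℝ 2 (α ν))
    (habar : ∀ ν p, abar α ν p = α ν p) (q : ℝ → Fin (m + k) → ℝ) (t : ℝ) (ν : Fin k) :
    ∑ i, ivel q t i * Bcoef α q t ν i = ptime (α ν) (plift q t) := by
  have hpq : ∀ j, ∑ i, ivel q t i * pq (pv (α ν) i) j (plift q t) = pq (α ν) j (plift q t) :=
    (sum_mul_pq_pv_of_euler (hα ν) (habar ν) · (plift q t))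
  have hpv : ∀ r, ∑ i, ivel q t i * pv (pv (α ν) i) r (plift q t) = 0 :=
    (sum_mul_pv_pv_of_euler (hα ν) (habar ν) · (plift q t))
  have hpt : ∑ i, ivel q t i * ptime (pv (α ν) i) (plift q t) = ptime (α ν) (plift q t) :=
    sum_mul_ptime_pv_of_euler (hα ν) (habar ν) (plift q t)
  have heuler : ∀ μ, ∑ i, ivel q t i * pv (α μ) i (plift q t) = α μ (plift q t) :=
    fun μ => habar μ (plift q t)
  simp only [Bcoef, mul_add, mul_sub, Finset.sum_add_distrib, Finset.sum_sub_distrib,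
    Finset.sum_mul_sum_mul_comm, hpq, hpv, hpt, heuler]
  simp [mul_comm]

end Constraints

section Lagrangian

variable {α : Fin k → PhasePt (m + k) m → ℝ} {T : PhasePt (m + k) (m + k) → ℝ}
  {U : (Fin (m + k) → ℝ) × ℝ → ℝ}

theorem contDiff_extVel (hα : ∀ ν, ContDiff ℝ 2 (α ν)) : ContDiff ℝ 2 (extVel α) :=
  contDiff_pi.2 <| Fin.addCases
    (fun i => by
      simp only [extVel, Fin.append_left]
      exact (contDiff_apply ℝ ℝ i).comp contDiff_snd.fst)
    (fun ν => by simpa [extVel] using hα ν)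

theorem contDiff_subst (hα : ∀ ν, ContDiff ℝ 2 (α ν)) (hT : ContDiff ℝ 2 T) :
    ContDiff ℝ 2 (subst α T) :=
  hT.comp (contDiff_fst.prodMk ((contDiff_extVel hα).prodMk contDiff_snd.snd))

theorem contDiff_Lag (hα : ∀ ν, ContDiff ℝ 2 (α ν)) (hT : ContDiff ℝ 2 T) (hU : ContDiff ℝ 2 U) :
    ContDiff ℝ 2 (Lag α T U) :=
  (contDiff_subst hα hT).add (hU.comp (contDiff_fst.prodMk contDiff_snd.snd))

theorem fderiv_Lag (hsubst : Differentiable ℝ (subst α T)) (hU : Differentiable ℝ U)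
    (p d : PhasePt (m + k) m) :
    fderiv ℝ (Lag α T U) p d = fderiv ℝ (subst α T) p d + fderiv ℝ U (p.1, p.2.2) (d.1, d.2.2) := by
  have h : HasFDerivAt (Lag α T U) _ p := (hsubst p).hasFDerivAt.add
    ((hU _).hasFDerivAt.comp p (hasFDerivAt_fst.prodMk hasFDerivAt_snd.snd))
  rw [h.fderiv]
  rfl

theorem pv_Lag (hsubst : Differentiable ℝ (subst α T)) (hU : Differentiable ℝ U) (i : Fin m) :
    pv (Lag α T U) i = pv (subst α T) i := by
  ext p
  simp [pv, fderiv_Lag hsubst hU, Prod.mk_zero_zero]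

theorem pq_Lag (hsubst : Differentiable ℝ (subst α T)) (hU : Differentiable ℝ U)
    (j : Fin (m + k)) (p : PhasePt (m + k) m) :
    pq (Lag α T U) j p = pq (subst α T) j p + pqU U j (p.1, p.2.2) :=
  fderiv_Lag hsubst hU p _

theorem sum_ivel_mul_deriv_pv_subst_of_eom (hα : ∀ ν, ContDiff ℝ 2 (α ν))
    (habar : ∀ ν p, abar α ν p = α ν p) (hsubst : Differentiable ℝ (subst α T))
    (hU : Differentiable ℝ U) (q : ℝ → Fin (m + k) → ℝ) (t : ℝ)
    (heom : ∀ i : Fin m,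
      deriv (fun s => pv (subst α T) i (plift q s)) t
        - pq (subst α T) (Fin.castAdd k i) (plift q t)
        - (∑ ν : Fin k, pq (subst α T) (Fin.natAdd m ν) (plift q t) * pv (α ν) i (plift q t))
        - (∑ ν : Fin k, Bcoef α q t ν i * pvT α T ν (plift q t)) =
      pqU U (Fin.castAdd k i) (q t, t)
        + ∑ ν : Fin k, pv (α ν) i (plift q t) * pqU U (Fin.natAdd m ν) (q t, t)) :
    ∑ i, ivel q t i * deriv (fun s => pv (subst α T) i (plift q s)) t =
      ∑ i, ivel q t i * pq (Lag α T U) (Fin.castAdd k i) (plift q t)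
        + ∑ ν, α ν (plift q t) * pq (Lag α T U) (Fin.natAdd m ν) (plift q t)
        + ∑ ν, pvT α T ν (plift q t) * ptime (α ν) (plift q t) := by
  have hvoronec : ∀ i, deriv (fun s => pv (subst α T) i (plift q s)) t =
      pq (Lag α T U) (Fin.castAdd k i) (plift q t)
        + ∑ ν, pv (α ν) i (plift q t) * pq (Lag α T U) (Fin.natAdd m ν) (plift q t)
        + ∑ ν, Bcoef α q t ν i * pvT α T ν (plift q t) := by
    intro i
    have hlift : ((plift q t).1, (plift q t).2.2) = (q t, t) := rfl
    simp only [pq_Lag hsubst hU, hlift, mul_add, Finset.sum_add_distrib,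
      mul_comm (pv (α _) i (plift q t)) (pq (subst α T) _ _)]
    linarith [heom i]
  have heuler : ∀ ν, ∑ i, ivel q t i * pv (α ν) i (plift q t) = α ν (plift q t) :=
    fun ν => habar ν (plift q t)
  simp only [hvoronec, mul_add, Finset.sum_add_distrib, Finset.sum_mul_sum_mul_comm, heuler,
    sum_ivel_mul_Bcoef hα habar, mul_comm (pvT α T _ _)]

end Lagrangian

theorem energy_balance_homogeneous_general
    (m k : ℕ)
    (α : Fin k → PhasePt (m + k) m → ℝ) (hα : ∀ ν, ContDiff ℝ 2 (α ν))
    (habar : ∀ (ν : Fin k) (p : PhasePt (m + k) m), abar α ν p = α ν p)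
    (T : PhasePt (m + k) (m + k) → ℝ) (hT : ContDiff ℝ 2 T)
    (U : (Fin (m + k) → ℝ) × ℝ → ℝ) (hU : ContDiff ℝ 2 U)
    (q : ℝ → Fin (m + k) → ℝ) (hq : ContDiff ℝ 2 q)
    (hadm : Admissible α q)
    (heom : ∀ (t : ℝ) (i : Fin m),
      deriv (fun s => pv (subst α T) i (plift q s)) t
        - pq (subst α T) (Fin.castAdd k i) (plift q t)
        - (∑ ν : Fin k, pq (subst α T) (Fin.natAdd m ν) (plift q t) * pv (α ν) i (plift q t))
        - (∑ ν : Fin k, Bcoef α q t ν i * pvT α T ν (plift q t)) =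
      pqU U (Fin.castAdd k i) (q t, t)
        + ∑ ν : Fin k, pv (α ν) i (plift q t) * pqU U (Fin.natAdd m ν) (q t, t)) :
    ∀ t : ℝ,
      deriv (fun s => energy (Lag α T U) q s) t =
        - ptime (Lag α T U) (plift q t)
          + ∑ ν : Fin k, pvT α T ν (plift q t) * ptime (α ν) (plift q t) := by
  intro t
  have hsubst : Differentiable ℝ (subst α T) := (contDiff_subst hα hT).differentiable two_ne_zero
  have hUdiff : Differentiable ℝ U := hU.differentiable two_ne_zero
  rw [(hasDerivAt_energy hq (contDiff_Lag hα hT hU) t).deriv,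
    sum_deriv_mul_pq_of_admissible hadm]
  simp only [pv_Lag hsubst hUdiff]
  rw [sum_ivel_mul_deriv_pv_subst_of_eom hα habar hsubst hUdiff q t (heom t)]
  ring

/-- Proposition 3 of the paper: simplified energy balance (25).
If `ᾱ ν = α ν` identically for every `ν` (i.e. the constraints are positively
homogeneous of degree 1 in the independent velocities), then along every admissible
`C²` solution of the Voronec-type equations of motion,
`d/dt(∑ i q̇ i ∂L*/∂q̇ i − L*) = − ∂L*/∂t + ∑ ν (∂T/∂q̇ (m+ν))(∂α ν/∂t)`. -/
theorem energy_balance_homogeneous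
    (m k : ℕ) (hm : 1 ≤ m) (hk : 1 ≤ k)
    (α : Fin k → PhasePt (m + k) m → ℝ) (hα : ∀ ν, ContDiff ℝ 2 (α ν))
    (habar : ∀ (ν : Fin k) (p : PhasePt (m + k) m), abar α ν p = α ν p)
    (T : PhasePt (m + k) (m + k) → ℝ) (hT : ContDiff ℝ 2 T)
    (U : (Fin (m + k) → ℝ) × ℝ → ℝ) (hU : ContDiff ℝ 2 U)
    (q : ℝ → Fin (m + k) → ℝ) (hq : ContDiff ℝ 2 q)
    (hadm : Admissible α q)
    (heom : ∀ (t : ℝ) (i : Fin m),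
      deriv (fun s => pv (subst α T) i (plift q s)) t
        - pq (subst α T) (Fin.castAdd k i) (plift q t)
        - (∑ ν : Fin k, pq (subst α T) (Fin.natAdd m ν) (plift q t) * pv (α ν) i (plift q t))
        - (∑ ν : Fin k, Bcoef α q t ν i * pvT α T ν (plift q t)) =
      pqU U (Fin.castAdd k i) (q t, t)
        + ∑ ν : Fin k, pv (α ν) i (plift q t) * pqU U (Fin.natAdd m ν) (q t, t)) :
    ∀ t : ℝ,
      deriv (fun s => energy (Lag α T U) q s) t =
        - ptime (Lag α T U) (plift q t)
          + ∑ ν : Fin k, pvT α T ν (plift q t) * ptime (α ν) (plift q t) :=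
  energy_balance_homogeneous_general m k α hα habar T hT U hU q hq hadm heom
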